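/- Let c ≥ 1 and n_1, n_2 ≥ 1 with n_1 ≤ n_2 and n_1 > 1. Let G be the graph formed by a clique S of size c completely joined to two disjoint cliques K_{n_1} and K_{n_2} (no edges between the two cliques), and let G' be similarly formed with cliques K_{n_1 - 1} and K_{n_2 + 1}. Then N(G') - N(G) = 2^{n_2} - 2^{n_1 - 1} > 0. -/

import Mathlib

open SimpleGraph

/-- Number of nonempty vertex subsets inducing a connected subgraph. -/
noncomputable def numConnSub {V : Type*} [Fintype V] (G : SimpleGraph V) : ℕ :=
  Set.ncard {S : Set V | S.Nonempty ∧ (G.induce S).Connected}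

/-- Number of vertex subsets containing `u` inducing a connected subgraph. -/
noncomputable def numConnSubAt {V : Type*} [Fintype V] (G : SimpleGraph V) (u : V) : ℕ :=
  Set.ncard {S : Set V | u ∈ S ∧ (G.induce S).Connected}

/-- The graph formed by a clique `S` of size `c` completely joined to two disjoint cliques
`K_{n₁}` and `K_{n₂}`, with no edges between the two cliques. -/
def threePart (c n₁ n₂ : ℕ) : SimpleGraph (Fin c ⊕ Fin n₁ ⊕ Fin n₂) :=
  SimpleGraph.fromRel (fun x y =>
    match x, y with
    | Sum.inr (Sum.inl _), Sum.inr (Sum.inr _) => False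
    | Sum.inr (Sum.inr _), Sum.inr (Sum.inl _) => False
    | _, _ => True)

/-!
A nonempty vertex set of `threePart c a b` induces a connected subgraph exactly when it meets
the central clique (whose vertices are adjacent to everything) or lies inside one of the two
side cliques, which have no edges between them. Counting these families gives
`N + 2^(a+b) + 2 = 2^(c+a+b) + 2^a + 2^b`; only the last two terms change when one vertex moves
from a side of size `n₁` to one of size `n₂`, and they grow by `2^n₂ - 2^(n₁-1)`.
-/

open Set

namespace Set

variable {α : Type*} [Finite α]

lemma ncard_compl_powerset_add (s : Set α) : (𝒫 s)ᶜ.ncard + 2 ^ s.ncard = 2 ^ Nat.card α := by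
  rw [← ncard_powerset s, add_comm, ncard_add_ncard_compl, ← ncard_univ (Set α), ← powerset_univ,
    ncard_powerset, ncard_univ]

lemma ncard_powerset_diff_empty_add_one (s : Set α) : (𝒫 s \ {∅}).ncard + 1 = 2 ^ s.ncard := by
  rw [ncard_sdiff_singleton_add_one (empty_subset s), ncard_powerset]

end Set

namespace SimpleGraph

variable {V : Type*} {G : SimpleGraph V}

lemma connected_induce_of_forall_adj {s : Set V} {u : V} (hu : u ∈ s)
    (h : ∀ v ∈ s, v ≠ u → G.Adj u v) : (G.induce s).Connected := by
  rw [connected_iff_exists_forall_reachable]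
  refine ⟨⟨u, hu⟩, fun ⟨v, hv⟩ => ?_⟩
  obtain rfl | hvu := eq_or_ne v u
  · rfl
  · exact Adj.reachable (h v hv hvu)

lemma IsClique.connected_induce {s : Set V} (h : G.IsClique s) (hs : s.Nonempty) :
    (G.induce s).Connected := by
  obtain ⟨u, hu⟩ := hs
  exact connected_induce_of_forall_adj hu fun v hv hvu => h hu hv hvu.symm

lemma subset_or_subset_of_preconnected_induce {s t u : Set V} (hs : s ⊆ t ∪ u)
    (htu : ∀ x ∈ t, ∀ y ∈ u, ¬ G.Adj x y) (h : (G.induce s).Preconnected) : s ⊆ t ∨ s ⊆ u := by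
  by_contra! ⟨hst, hsu⟩
  obtain ⟨x, hxs, hxu⟩ := not_subset.1 hsu
  obtain ⟨y, hys, hyt⟩ := not_subset.1 hst
  obtain ⟨p⟩ := h ⟨x, hxs⟩ ⟨y, hys⟩
  obtain ⟨d, -, hd_fst, hd_snd⟩ :=
    p.exists_boundary_dart {z | z.1 ∈ t} ((hs hxs).resolve_right hxu) hyt
  exact htu _ hd_fst _ ((hs d.snd.2).resolve_left hd_snd) d.adj

end SimpleGraph

namespace threePart

variable {c a b : ℕ}

variable (c a b) in
def left : Set (Fin c ⊕ Fin a ⊕ Fin b) := range (Sum.inr ∘ Sum.inl)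

variable (c a b) in
def right : Set (Fin c ⊕ Fin a ⊕ Fin b) := range (Sum.inr ∘ Sum.inr)

lemma adj_inl (s : Fin c) (y : Fin c ⊕ Fin a ⊕ Fin b) (h : Sum.inl s ≠ y) :
    (threePart c a b).Adj (Sum.inl s) y := by
  rw [threePart, fromRel_adj]
  exact ⟨h, Or.inl (by rcases y with _ | _ | _ <;> trivial)⟩

lemma isClique_left : (threePart c a b).IsClique (left c a b) := by
  rintro _ ⟨i, rfl⟩ _ ⟨j, rfl⟩ h
  rw [threePart, fromRel_adj]
  exact ⟨h, Or.inl trivial⟩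

lemma isClique_right : (threePart c a b).IsClique (right c a b) := by
  rintro _ ⟨i, rfl⟩ _ ⟨j, rfl⟩ h
  rw [threePart, fromRel_adj]
  exact ⟨h, Or.inl trivial⟩

lemma not_adj_left_right : ∀ x ∈ left c a b, ∀ y ∈ right c a b, ¬ (threePart c a b).Adj x y := by
  rintro _ ⟨i, rfl⟩ _ ⟨j, rfl⟩
  rw [threePart, fromRel_adj]
  rintro ⟨-, h | h⟩ <;> exact h

lemma range_inr_eq_left_union_right :
    range (Sum.inr : Fin a ⊕ Fin b → Fin c ⊕ Fin a ⊕ Fin b) = left c a b ∪ right c a b := by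
  ext x
  simp [left, right, Sum.exists]

lemma disjoint_left_right : Disjoint (left c a b) (right c a b) := by
  rw [Set.disjoint_left]
  rintro _ ⟨i, rfl⟩ ⟨j, h⟩
  simp at h

lemma setOf_connected_eq :
    {A | A.Nonempty ∧ ((threePart c a b).induce A).Connected} =
      (𝒫 range Sum.inr)ᶜ ∪ (𝒫 left c a b \ {∅} ∪ 𝒫 right c a b \ {∅}) := by
  ext A
  simp only [mem_ofPred_eq, mem_union, mem_compl_iff, mem_powerset_iff, mem_sdiff,
    mem_singleton_iff, ← nonempty_iff_ne_empty]
  constructor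
  · rintro ⟨hne, hconn⟩
    by_cases hA : A ⊆ range Sum.inr
    · rw [range_inr_eq_left_union_right] at hA
      rcases subset_or_subset_of_preconnected_induce hA not_adj_left_right hconn.preconnected
        with hL | hR
      exacts [Or.inr (Or.inl ⟨hL, hne⟩), Or.inr (Or.inr ⟨hR, hne⟩)]
    · exact Or.inl hA
  · rintro (hA | ⟨hL, hne⟩ | ⟨hR, hne⟩)
    · obtain ⟨x, hx, hxr⟩ := not_subset.1 hA
      rcases x with s | y
      · exact ⟨⟨_, hx⟩, connected_induce_of_forall_adj hx fun v _ hv => adj_inl s v hv.symm⟩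
      · exact absurd ⟨y, rfl⟩ hxr
    · exact ⟨hne, (isClique_left.subset hL).connected_induce hne⟩
    · exact ⟨hne, (isClique_right.subset hR).connected_induce hne⟩

lemma ncard_left : (left c a b).ncard = a := by
  simp [left, ncard_range_of_injective (Sum.inr_injective.comp Sum.inl_injective)]

lemma ncard_right : (right c a b).ncard = b := by
  simp [right, ncard_range_of_injective (Sum.inr_injective.comp Sum.inr_injective)]

end threePart

open threePart in
lemma numConnSub_threePart_add (c a b : ℕ) :
    numConnSub (threePart c a b) + 2 ^ (a + b) + 2 = 2 ^ (c + a + b) + 2 ^ a + 2 ^ b := by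
  have hdisj_sides : Disjoint (𝒫 left c a b \ {∅}) (𝒫 right c a b \ {∅}) := by
    rw [Set.disjoint_left]
    rintro A ⟨hL, hA⟩ ⟨hR, -⟩
    exact hA (subset_empty_iff.1 ((subset_inter hL hR).trans disjoint_left_right.inter_eq.subset))
  have hdisj_centre :
      Disjoint (𝒫 range Sum.inr)ᶜ (𝒫 left c a b \ {∅} ∪ 𝒫 right c a b \ {∅}) := by
    rw [disjoint_compl_left_iff_subset, range_inr_eq_left_union_right]
    exact union_subset (sdiff_subset.trans (powerset_mono.2 subset_union_left))
      (sdiff_subset.trans (powerset_mono.2 subset_union_right))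
  have hcentre :=
    ncard_compl_powerset_add (range (Sum.inr : Fin a ⊕ Fin b → Fin c ⊕ Fin a ⊕ Fin b))
  have hleft := ncard_powerset_diff_empty_add_one (left c a b)
  have hright := ncard_powerset_diff_empty_add_one (right c a b)
  rw [ncard_range_of_injective Sum.inr_injective] at hcentre
  simp only [Nat.card_eq_fintype_card, Fintype.card_sum, Fintype.card_fin, ← add_assoc]
    at hcentre
  rw [ncard_left] at hleft
  rw [ncard_right] at hright
  rw [numConnSub, setOf_connected_eq, ncard_union_eq hdisj_centre, ncard_union_eq hdisj_sides]
  omega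

theorem numConnSub_threePart_shift_general (c n₁ n₂ : ℕ) (h₁₂ : n₁ ≤ n₂)
    (h₁ : 1 < n₁) :
    numConnSub (threePart c (n₁ - 1) (n₂ + 1)) + 2 ^ (n₁ - 1) =
        numConnSub (threePart c n₁ n₂) + 2 ^ n₂ ∧
      numConnSub (threePart c n₁ n₂) < numConnSub (threePart c (n₁ - 1) (n₂ + 1)) := by
  have hG := numConnSub_threePart_add c n₁ n₂
  have hG' := numConnSub_threePart_add c (n₁ - 1) (n₂ + 1)
  rw [show c + (n₁ - 1) + (n₂ + 1) = c + n₁ + n₂ by omega,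
    show n₁ - 1 + (n₂ + 1) = n₁ + n₂ by omega, pow_succ 2 n₂] at hG'
  have hpow : 2 ^ n₁ = 2 ^ (n₁ - 1) * 2 := by rw [← pow_succ, Nat.sub_add_cancel h₁.le]
  have hlt : 2 ^ (n₁ - 1) < 2 ^ n₂ := Nat.pow_lt_pow_right one_lt_two (by omega)
  omega

/-- Moving one vertex from the smaller clique to the larger one strictly increases the
number of connected induced subgraphs: `N(G') - N(G) = 2^(n₂) - 2^(n₁-1) > 0`. -/
theorem numConnSub_threePart_shift (c n₁ n₂ : ℕ) (hc : 1 ≤ c) (h₁₂ : n₁ ≤ n₂)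
    (h₁ : 1 < n₁) :
    numConnSub (threePart c (n₁ - 1) (n₂ + 1)) + 2 ^ (n₁ - 1) =
        numConnSub (threePart c n₁ n₂) + 2 ^ n₂ ∧
      numConnSub (threePart c n₁ n₂) < numConnSub (threePart c (n₁ - 1) (n₂ + 1)) :=
  numConnSub_threePart_shift_general c n₁ n₂ h₁₂ h₁
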